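/- Let K ≥ 2 be an integer and let 0 < β < 1. Then min{ ‖v‖_β : v ∈ T^K } = 2^{1/β − 1}, where ‖v‖_β = (Σ_{k=1}^K |v_k|^β)^{1/β} and T^K = {v ∈ ℝ^K : ‖v‖₁ = 1 and Σ_{k=1}^K v_k = 0}. Moreover, the minimum is attained at the vector v with v_1 = −1/2, v_2 = 1/2, and v_k = 0 for all k > 2. -/
import Mathlib


open Finset Real

/-- The α-Tsallis entropy on the positive orthant (Shannon for α = 1, Burg for α = 0). -/
noncomputable def tsallis (α : ℝ) {K : ℕ} (p : Fin K → ℝ) : ℝ :=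
  if α = 0 then ∑ k, Real.log (p k)
  else if α = 1 then -∑ k, p k * Real.log (p k)
  else (∑ k, p k ^ α) / (α * (1 - α))

/-- The gradient of the α-Tsallis entropy on the positive orthant. -/
noncomputable def tsallisGrad (α : ℝ) {K : ℕ} (q : Fin K → ℝ) (k : Fin K) : ℝ :=
  if α = 0 then 1 / q k
  else if α = 1 then -(1 + Real.log (q k))
  else -(q k ^ (α - 1)) / (α - 1)

/-- The Bregman divergence D_α of the negative α-Tsallis entropy:
`D_α(p‖q) = -S_α(p) + S_α(q) + ⟨∇S_α(q), p - q⟩`. -/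
noncomputable def breg (α : ℝ) {K : ℕ} (p q : Fin K → ℝ) : ℝ :=
  -tsallis α p + tsallis α q + ∑ k, tsallisGrad α q k * (p k - q k)

/-- The relative interior of the probability simplex Δ^K. -/
def relintSimplex (K : ℕ) : Set (Fin K → ℝ) :=
  {p | (∀ k, 0 < p k ∧ p k < 1) ∧ ∑ k, p k = 1}

/-- The ℓ¹ norm on ℝ^K. -/
noncomputable def l1 {K : ℕ} (x : Fin K → ℝ) : ℝ := ∑ k, |x k|

/-- Unit ℓ¹-sphere of the tangent space of the simplex. -/
def tangentSphere (K : ℕ) : Set (Fin K → ℝ) :=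
  {v | (∑ k, |v k|) = 1 ∧ (∑ k, v k) = 0}

/-- The minimizer concentrated on the first two coordinates. -/
noncomputable def vTwoCoords (K : ℕ) : Fin K → ℝ :=
  fun k => if k.val = 0 then -(1 / 2) else if k.val = 1 then 1 / 2 else 0

lemma myRpowAddLe {a b p : ℝ} (ha : 0 ≤ a) (hb : 0 ≤ b) (hp : 0 ≤ p) (hp1 : p ≤ 1) :
    (a + b) ^ p ≤ a ^ p + b ^ p := by
  have h := NNReal.coe_le_coe.2 (NNReal.rpow_add_le_add_rpow a.toNNReal b.toNNReal hp hp1)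
  simpa [NNReal.coe_rpow, Real.coe_toNNReal _ ha, Real.coe_toNNReal _ hb] using h

lemma mySumRpow {ι : Type*} (s : Finset ι) (f : ι → ℝ) (hf : ∀ i ∈ s, 0 ≤ f i)
    {p : ℝ} (hp : 0 < p) (hp1 : p ≤ 1) :
    (∑ i ∈ s, f i) ^ p ≤ ∑ i ∈ s, f i ^ p := by
  induction s using Finset.cons_induction with
  | empty => simp [Real.zero_rpow hp.ne']
  | cons a s ha ih =>
    rw [Finset.sum_cons, Finset.sum_cons]
    have h1 := myRpowAddLe (hf a (Finset.mem_cons_self a s))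
      (Finset.sum_nonneg fun i hi => hf i (Finset.mem_cons_of_mem hi)) hp.le hp1
    exact h1.trans (by linarith [ih fun i hi => hf i (Finset.mem_cons_of_mem hi)])

lemma mySumTwo {K : ℕ} (hK : 2 ≤ K) (a b : ℝ) :
    ∑ k : Fin K, (if k.val = 0 then a else if k.val = 1 then b else 0) = a + b := by
  have h0 : (0:ℕ) < K := by omega
  have h1 : (1:ℕ) < K := by omega
  have : (fun k : Fin K => if k.val = 0 then a else if k.val = 1 then b else 0)
      = fun k => (if k = ⟨0,h0⟩ then a else 0) + (if k = ⟨1,h1⟩ then b else 0) := by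
    funext k
    by_cases hk0 : k.val = 0
    · simp [hk0, Fin.ext_iff]
    · by_cases hk1 : k.val = 1 <;> simp [hk0, hk1, Fin.ext_iff]
  rw [this, Finset.sum_add_distrib, Finset.sum_ite_eq', Finset.sum_ite_eq']
  simp

lemma myVal {β : ℝ} (hβ0 : 0 < β) :
    (((1:ℝ)/2) ^ β + (1/2) ^ β) ^ (1/β) = (2:ℝ) ^ (1/β - 1) := by
  have h2 : ((1:ℝ)/2) ^ β = (2:ℝ) ^ (-β) := by
    rw [one_div, Real.inv_rpow (by norm_num), ← Real.rpow_neg (by norm_num)]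
  have h3 : ((1:ℝ)/2) ^ β + (1/2) ^ β = (2:ℝ) ^ (1 - β) := by
    rw [h2, ← two_mul, sub_eq_add_neg, Real.rpow_add (by norm_num), Real.rpow_one]
  rw [h3, ← Real.rpow_mul (by norm_num)]
  congr 1
  field_simp


theorem min_beta_norm_tangent_sphere_beta_lt_one (K : ℕ) (hK : 2 ≤ K)
    (β : ℝ) (hβ0 : 0 < β) (hβ1 : β < 1) :
    IsLeast {r : ℝ | ∃ v ∈ tangentSphere K, r = (∑ k, |v k| ^ β) ^ (1 / β)}
      ((2 : ℝ) ^ (1 / β - 1)) ∧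
    vTwoCoords K ∈ tangentSphere K ∧
    (∑ k, |vTwoCoords K k| ^ β) ^ (1 / β) = (2 : ℝ) ^ (1 / β - 1) := by
  have hβne : β ≠ 0 := hβ0.ne'
  have habs : ∀ k : Fin K, |vTwoCoords K k|
      = if k.val = 0 then (1/2 : ℝ) else if k.val = 1 then 1/2 else 0 := by
    intro k; unfold vTwoCoords; split_ifs <;> norm_num
  have hmem : vTwoCoords K ∈ tangentSphere K := by
    constructor
    · rw [show (fun k : Fin K => |vTwoCoords K k|)
          = fun k => if k.val = 0 then (1/2 : ℝ) else if k.val = 1 then 1/2 else 0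
          from funext habs]
      rw [mySumTwo hK]; norm_num
    · unfold vTwoCoords; rw [mySumTwo hK]; norm_num
  have hvalw : (∑ k, |vTwoCoords K k| ^ β) ^ (1/β) = (2:ℝ) ^ (1/β - 1) := by
    have : (fun k : Fin K => |vTwoCoords K k| ^ β)
        = fun k => if k.val = 0 then ((1:ℝ)/2) ^ β else if k.val = 1 then (1/2) ^ β else 0 := by
      funext k; rw [habs k]; split_ifs <;> simp [Real.zero_rpow hβne]
    rw [show (∑ k, |vTwoCoords K k| ^ β) = ∑ k : Fin K,
        (if k.val = 0 then ((1:ℝ)/2) ^ β else if k.val = 1 then (1/2) ^ β else 0) from by rw [this],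
      mySumTwo hK, myVal hβ0]
  refine ⟨⟨⟨vTwoCoords K, hmem, hvalw.symm⟩, ?_⟩, hmem, hvalw⟩
  rintro r ⟨v, ⟨hv1, hv0⟩, rfl⟩
  set p : Fin K → ℝ := fun k => max (v k) 0 with hp
  set n : Fin K → ℝ := fun k => max (-v k) 0 with hn
  have habs2 : ∀ k, |v k| = p k + n k := by
    intro k
    rcases le_total (v k) 0 with h | h
    · simp [hp, hn, abs_of_nonpos h, max_eq_right h, max_eq_left (neg_nonneg.2 h)]
    · simp [hp, hn, abs_of_nonneg h, max_eq_left h, max_eq_right (neg_nonpos.2 h)]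
  have hsub : ∀ k, p k - n k = v k := by
    intro k
    rcases le_total (v k) 0 with h | h
    · simp [hp, hn, max_eq_right h, max_eq_left (neg_nonneg.2 h)]
    · simp [hp, hn, max_eq_left h, max_eq_right (neg_nonpos.2 h)]
  have hPN : (∑ k, p k) + (∑ k, n k) = 1 := by
    rw [← Finset.sum_add_distrib, ← hv1]
    exact Finset.sum_congr rfl fun k _ => (habs2 k).symm
  have hPmN : (∑ k, p k) - (∑ k, n k) = 0 := by
    rw [← Finset.sum_sub_distrib, ← hv0]
    exact Finset.sum_congr rfl fun k _ => hsub k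
  have hP : (∑ k, p k) = 1/2 := by linarith
  have hN : (∑ k, n k) = 1/2 := by linarith
  have hsplit : ∀ k, |v k| ^ β = p k ^ β + n k ^ β := by
    intro k
    rcases le_total (v k) 0 with h | h
    · rw [abs_of_nonpos h]
      simp [hp, hn, max_eq_right h, max_eq_left (neg_nonneg.2 h), Real.zero_rpow hβne]
    · rw [abs_of_nonneg h]
      simp [hp, hn, max_eq_left h, max_eq_right (neg_nonpos.2 h), Real.zero_rpow hβne]
  have hlow : ((1:ℝ)/2) ^ β + (1/2) ^ β ≤ ∑ k, |v k| ^ β := by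
    calc ((1:ℝ)/2) ^ β + (1/2) ^ β
        = (∑ k, p k) ^ β + (∑ k, n k) ^ β := by rw [hP, hN]
      _ ≤ (∑ k, p k ^ β) + (∑ k, n k ^ β) :=
          add_le_add (mySumRpow _ _ (fun k _ => le_max_right _ _) hβ0 hβ1.le)
            (mySumRpow _ _ (fun k _ => le_max_right _ _) hβ0 hβ1.le)
      _ = ∑ k, |v k| ^ β := by
          rw [← Finset.sum_add_distrib]
          exact Finset.sum_congr rfl fun k _ => (hsplit k).symm
  calc (2:ℝ) ^ (1/β - 1) = (((1:ℝ)/2) ^ β + (1/2) ^ β) ^ (1/β) := (myVal hβ0).symm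
    _ ≤ (∑ k, |v k| ^ β) ^ (1/β) :=
        Real.rpow_le_rpow (by positivity) hlow (by positivity)
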